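/- Under the KKT-type conditions at a feasible x* (existence of τ > 0 and λ ≥ 0 with Σᵢ τ_i ∇(f_i/g_i)(x*) + Σⱼ λ_j ∇h_j(x*) = 0 and Σⱼ λ_j h_j(x*) = 0, h_j convex), if for every i the matrix A_i - (f_i(x*)/g_i(x*))B_i is positive semidefinite, then x* is Pareto optimal for the vector quadratic fractional problem. -/

import Mathlib

/-!
For `φᵢ = fᵢ x* / gᵢ x*` the function `fᵢ - φᵢ gᵢ` is a convex quadratic vanishing at `x*`, and its
gradient there is `gᵢ x*` times the gradient of `fᵢ / gᵢ`. If a feasible `x` dominated `x*`, the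
gradient inequality would make every `∇(fᵢ / gᵢ)(x*) ⬝ᵥ (x - x*)` nonpositive and one of them
negative, while convexity of the `hⱼ` and complementary slackness give
`∑ λⱼ ∇hⱼ(x*) ⬝ᵥ (x - x*) ≤ ∑ λⱼ hⱼ x ≤ 0`. Dotting the stationarity equation with `x - x*` then
yields `0 < 0`.
-/

open Matrix

section Quadratic

variable {ι R : Type*} [Fintype ι]

lemma Matrix.IsSymm.dotProduct_mulVec_comm [CommSemiring R] {M : Matrix ι ι R} (hM : M.IsSymm)
    (u v : ι → R) : u ⬝ᵥ (M *ᵥ v) = v ⬝ᵥ (M *ᵥ u) := by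
  rw [dotProduct_mulVec, ← mulVec_transpose, hM.eq, dotProduct_comm]

lemma Matrix.IsSymm.quadForm_sub_sub_dotProduct [CommRing R] {M : Matrix ι ι R} (hM : M.IsSymm)
    (x y : ι → R) :
    x ⬝ᵥ (M *ᵥ x) - y ⬝ᵥ (M *ᵥ y) - ((2 : R) • (M *ᵥ y)) ⬝ᵥ (x - y) =
      (x - y) ⬝ᵥ (M *ᵥ (x - y)) := by
  simp only [mulVec_sub, dotProduct_sub, sub_dotProduct, smul_dotProduct, smul_eq_mul]
  rw [dotProduct_comm (M *ᵥ y) x, dotProduct_comm (M *ᵥ y) y, hM.dotProduct_mulVec_comm x y]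
  ring

lemma Matrix.IsSymm.quadratic_gradient_dotProduct_le [CommRing R] [LinearOrder R]
    [IsStrictOrderedRing R] {M : Matrix ι ι R} (hM : M.IsSymm) (hpsd : ∀ v, 0 ≤ v ⬝ᵥ (M *ᵥ v))
    (c x y : ι → R) :
    ((2 : R) • (M *ᵥ y) + c) ⬝ᵥ (x - y) ≤
      (x ⬝ᵥ (M *ᵥ x) + c ⬝ᵥ x) - (y ⬝ᵥ (M *ᵥ y) + c ⬝ᵥ y) := by
  have := hM.quadForm_sub_sub_dotProduct x y
  rw [add_dotProduct, dotProduct_sub c]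
  linarith [hpsd (x - y)]

end Quadratic

section Fractional

variable {ι : Type*} [Fintype ι] {A B : Matrix ι ι ℝ} {a b : ι → ℝ} {abar bbar : ℝ}
  {f g : (ι → ℝ) → ℝ}

lemma quadratic_ratio_gradient_dotProduct_le (hA : A.IsSymm) (hB : B.IsSymm)
    (hf : ∀ x, f x = x ⬝ᵥ (A *ᵥ x) + a ⬝ᵥ x + abar)
    (hg : ∀ x, g x = x ⬝ᵥ (B *ᵥ x) + b ⬝ᵥ x + bbar) {x y : ι → ℝ} (hgy : 0 < g y)
    (hpsd : ∀ v, 0 ≤ v ⬝ᵥ ((A - (f y / g y) • B) *ᵥ v)) :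
    ((g y ^ 2)⁻¹ • (g y • ((2 : ℝ) • (A *ᵥ y) + a) - f y • ((2 : ℝ) • (B *ᵥ y) + b))) ⬝ᵥ (x - y)
      ≤ (f x - f y / g y * g x) / g y := by
  set φ := f y / g y
  have hφ : f y - φ * g y = 0 := by simp only [φ]; field_simp; ring
  have hconv := (hA.sub (hB.smul φ)).quadratic_gradient_dotProduct_le hpsd (a - φ • b) x y
  have hF : ∀ v, f v - φ * g v =
      v ⬝ᵥ ((A - φ • B) *ᵥ v) + (a - φ • b) ⬝ᵥ v + (abar - φ * bbar) := by
    intro v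
    simp only [hf, hg, sub_mulVec, smul_mulVec, dotProduct_sub, dotProduct_smul,
      sub_dotProduct, smul_dotProduct, smul_eq_mul]
    ring
  have hgrad : (g y ^ 2)⁻¹ • (g y • ((2 : ℝ) • (A *ᵥ y) + a) - f y • ((2 : ℝ) • (B *ᵥ y) + b)) =
      (g y)⁻¹ • ((2 : ℝ) • ((A - φ • B) *ᵥ y) + (a - φ • b)) := by
    ext k
    simp only [φ, Pi.smul_apply, Pi.add_apply, Pi.sub_apply, sub_mulVec, smul_mulVec, smul_eq_mul]
    field_simp
    ring
  rw [hgrad, smul_dotProduct, smul_eq_mul, inv_mul_eq_div]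
  gcongr
  linarith [hF x, hF y]

end Fractional

theorem stmt_4_general {n m ℓ : ℕ}
    (A B : Fin m → Matrix (Fin n) (Fin n) ℝ)
    (a b : Fin m → Fin n → ℝ) (abar bbar : Fin m → ℝ)
    (hA : ∀ i, (A i).IsSymm) (hB : ∀ i, (B i).PosSemidef)
    (f g : Fin m → (Fin n → ℝ) → ℝ)
    (hf : ∀ i x, f i x = x ⬝ᵥ (A i *ᵥ x) + a i ⬝ᵥ x + abar i)
    (hg : ∀ i x, g i x = x ⬝ᵥ (B i *ᵥ x) + b i ⬝ᵥ x + bbar i)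
    (hgpos : ∀ i x, 0 < g i x)
    (h : Fin ℓ → (Fin n → ℝ) → ℝ) (hgrad : Fin ℓ → (Fin n → ℝ) → (Fin n → ℝ))
    (hconv : ∀ j x y, h j x - h j y ≥ (hgrad j y) ⬝ᵥ (x - y))
    (S : Set (Fin n → ℝ)) (hS : S = {x | ∀ j, h j x ≤ 0})
    (xs : Fin n → ℝ)
    (τ : Fin m → ℝ) (lam : Fin ℓ → ℝ)
    (hτ : ∀ i, 0 < τ i) (hlam : ∀ j, 0 ≤ lam j)
    (hstat : ∑ i, τ i •
        (((g i xs) ^ 2)⁻¹ •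
          ((g i xs) • ((2 : ℝ) • (A i *ᵥ xs) + a i) - (f i xs) • ((2 : ℝ) • (B i *ᵥ xs) + b i)))
        + ∑ j, lam j • hgrad j xs = 0)
    (hcomp : ∑ j, lam j * h j xs = 0)
    (hpsd : ∀ i, ∀ v : Fin n → ℝ, 0 ≤ v ⬝ᵥ ((A i - (f i xs / g i xs) • B i) *ᵥ v)) :
    ¬ ∃ x ∈ S, (∀ i, f i x / g i x ≤ f i xs / g i xs) ∧
        (∃ i, f i x / g i x < f i xs / g i xs) := by
  rintro ⟨x, hxS, hle, i₀, hlt⟩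
  rw [hS] at hxS
  have hdir := congrArg (· ⬝ᵥ (x - xs)) hstat
  simp only [add_dotProduct, sum_dotProduct, zero_dotProduct] at hdir
  have hratio i := quadratic_ratio_gradient_dotProduct_le (hA i)
    (isHermitian_iff_isSymm.1 (hB i).isHermitian) (hf i) (hg i) (x := x) (hgpos i xs) (hpsd i)
  have hgap i : f i x - f i xs / g i xs * g i x ≤ 0 :=
    sub_nonpos.2 ((div_le_iff₀ (hgpos i x)).1 (hle i))
  have hgap₀ : f i₀ x - f i₀ xs / g i₀ xs * g i₀ x < 0 :=
    sub_neg.2 ((div_lt_iff₀ (hgpos i₀ x)).1 hlt)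
  refine (add_neg_of_neg_of_nonpos ?_ ?_).ne hdir
  · refine Finset.sum_neg' (fun i _ => ?_) ⟨i₀, Finset.mem_univ _, ?_⟩ <;>
      rw [smul_dotProduct, smul_eq_mul]
    · exact mul_nonpos_of_nonneg_of_nonpos (hτ i).le
        ((hratio i).trans (div_nonpos_of_nonpos_of_nonneg (hgap i) (hgpos i xs).le))
    · exact mul_neg_of_pos_of_neg (hτ i₀)
        ((hratio i₀).trans_lt (div_neg_of_neg_of_pos hgap₀ (hgpos i₀ xs)))
  · calc
      _ ≤ ∑ j, lam j * (h j x - h j xs) := Finset.sum_le_sum fun j _ =>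
        (smul_dotProduct _ _ _).trans_le (mul_le_mul_of_nonneg_left (hconv j x xs) (hlam j))
      _ = ∑ j, lam j * h j x := by simp only [mul_sub, Finset.sum_sub_distrib, hcomp, sub_zero]
      _ ≤ 0 := Finset.sum_nonpos fun j _ => mul_nonpos_of_nonneg_of_nonpos (hlam j) (hxS j)

theorem stmt_4 {n m ℓ : ℕ}
    (A B : Fin m → Matrix (Fin n) (Fin n) ℝ)
    (a b : Fin m → Fin n → ℝ) (abar bbar : Fin m → ℝ)
    (hA : ∀ i, (A i).IsSymm) (hB : ∀ i, (B i).PosSemidef)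
    (f g : Fin m → (Fin n → ℝ) → ℝ)
    (hf : ∀ i x, f i x = x ⬝ᵥ (A i *ᵥ x) + a i ⬝ᵥ x + abar i)
    (hg : ∀ i x, g i x = x ⬝ᵥ (B i *ᵥ x) + b i ⬝ᵥ x + bbar i)
    (hgpos : ∀ i x, 0 < g i x)
    (h : Fin ℓ → (Fin n → ℝ) → ℝ) (hgrad : Fin ℓ → (Fin n → ℝ) → (Fin n → ℝ))
    (hconv : ∀ j x y, h j x - h j y ≥ (hgrad j y) ⬝ᵥ (x - y))
    (S : Set (Fin n → ℝ)) (hS : S = {x | ∀ j, h j x ≤ 0})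
    (xs : Fin n → ℝ) (hxs : xs ∈ S)
    (τ : Fin m → ℝ) (lam : Fin ℓ → ℝ)
    (hτ : ∀ i, 0 < τ i) (hlam : ∀ j, 0 ≤ lam j)
    (hstat : ∑ i, τ i •
        (((g i xs) ^ 2)⁻¹ •
          ((g i xs) • ((2 : ℝ) • (A i *ᵥ xs) + a i) - (f i xs) • ((2 : ℝ) • (B i *ᵥ xs) + b i)))
        + ∑ j, lam j • hgrad j xs = 0)
    (hcomp : ∑ j, lam j * h j xs = 0)
    (hpsd : ∀ i, ∀ v : Fin n → ℝ, 0 ≤ v ⬝ᵥ ((A i - (f i xs / g i xs) • B i) *ᵥ v)) :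
    ¬ ∃ x ∈ S, (∀ i, f i x / g i x ≤ f i xs / g i xs) ∧
        (∃ i, f i x / g i x < f i xs / g i xs) :=
  stmt_4_general A B a b abar bbar hA hB f g hf hg hgpos h hgrad hconv S hS xs τ lam hτ hlam hstat
    hcomp hpsd
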